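/- Let G: ℝ³ → ℝ be a smooth function satisfying G(x, y, −z) = G(x, y, z) for all (x,y,z) (so the plane z = 0 is a plane of symmetry of the level surface G = 0). Let c: I → ℝ³ be a C² curve with ‖c'(s)‖ = 1 for all s, lying in the plane of symmetry (the third component c₃(s) = 0 for all s) and on the surface (G(c(s)) = 0 for all s), and suppose ∇G(c(s)) ≠ 0 for all s. Then for every s, the acceleration c''(s) is a scalar multiple of ∇G(c(s)); that is, c''(s) is normal to the level surface G = 0, so c is a geodesic of that surface. (The curve formed by the intersection of a smooth surface with a plane of symmetry, parameterized by arc length, is a geodesic.) -/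

import Mathlib

open scoped RealInnerProductSpace


noncomputable section

/-- The point (a, b, c) of Euclidean 3-space. -/
def mk3 (a b c : ℝ) : EuclideanSpace ℝ (Fin 3) :=
  (WithLp.equiv 2 (Fin 3 → ℝ)).symm ![a, b, c]


lemma st10_deriv_zero_of_const_on {F : Type*} [NormedAddCommGroup F] [NormedSpace ℝ F]
    {f : ℝ → F} {I : Set ℝ} (hI : IsOpen I) {s : ℝ} (hs : s ∈ I) {C : F}
    (h : ∀ t ∈ I, f t = C) {d : F} (hd : HasDerivAt f d s) : d = 0 :=
  hd.unique <| (hasDerivAt_const s C).congr_of_eventuallyEq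
    (Filter.eventually_of_mem (hI.mem_nhds hs) h)

def refl3 : EuclideanSpace ℝ (Fin 3) →L[ℝ] EuclideanSpace ℝ (Fin 3) :=
  ContinuousLinearMap.id ℝ _ -
    (2 : ℝ) • ((EuclideanSpace.proj (2 : Fin 3)).smulRight (EuclideanSpace.single (2 : Fin 3) (1 : ℝ)))

lemma refl3_apply (p : EuclideanSpace ℝ (Fin 3)) : refl3 p = mk3 (p 0) (p 1) (-(p 2)) := by
  ext i
  fin_cases i <;>
    simp [refl3, mk3, EuclideanSpace.single_apply, WithLp.equiv_symm_apply, PiLp.toLp_apply] <;> ring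

lemma refl3_fixed {p : EuclideanSpace ℝ (Fin 3)} (hp : p 2 = 0) : refl3 p = p := by
  ext i
  fin_cases i <;> simp [refl3, EuclideanSpace.single_apply, hp]

lemma refl3_single : refl3 (EuclideanSpace.single (2 : Fin 3) (1 : ℝ)) =
    -(EuclideanSpace.single (2 : Fin 3) (1 : ℝ)) := by
  ext i
  fin_cases i <;> simp [refl3, EuclideanSpace.single_apply] <;> ring

lemma st10_fderiv_eq_inner (g : EuclideanSpace ℝ (Fin 3) → ℝ) (p v : EuclideanSpace ℝ (Fin 3)) :
    fderiv ℝ g p v = ⟪gradient g p, v⟫ := by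
  rw [gradient, InnerProductSpace.toDual_symm_apply]

/-- If `G` is symmetric in the third coordinate and differentiable, its gradient at a point
of the symmetry plane has vanishing third component. -/
lemma st10_grad_comp2 (G : EuclideanSpace ℝ (Fin 3) → ℝ) (hG : ContDiff ℝ (⊤ : ℕ∞) G)
    (hsym : ∀ p : EuclideanSpace ℝ (Fin 3), G (mk3 (p 0) (p 1) (-(p 2))) = G p)
    {p : EuclideanSpace ℝ (Fin 3)} (hp : p 2 = 0) : gradient G p 2 = 0 := by
  have hGdiff : ∀ q, DifferentiableAt ℝ G q := fun q => (hG.differentiable (by simp)) q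
  have hGL : (G ∘ refl3) = G := by
    funext q; simp only [Function.comp_apply, refl3_apply]; exact hsym q
  have hchain : fderiv ℝ (G ∘ refl3) p = (fderiv ℝ G (refl3 p)).comp (fderiv ℝ refl3 p) :=
    fderiv_comp p (hGdiff _) refl3.differentiableAt
  rw [refl3.fderiv, refl3_fixed hp, hGL] at hchain
  have h2 : fderiv ℝ G p (EuclideanSpace.single (2 : Fin 3) (1 : ℝ)) = 0 := by
    have := congrArg (fun (f : EuclideanSpace ℝ (Fin 3) →L[ℝ] ℝ) =>
      f (EuclideanSpace.single (2 : Fin 3) (1 : ℝ))) hchain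
    simp only [ContinuousLinearMap.comp_apply, refl3_single, map_neg] at this
    linarith
  have := st10_fderiv_eq_inner G p (EuclideanSpace.single (2 : Fin 3) (1 : ℝ))
  rw [h2, EuclideanSpace.inner_single_right] at this
  simpa using this.symm

/-- The intersection of a smooth regular level surface G = 0 with a plane
of symmetry z = 0, parameterized by arc length, is a geodesic: its acceleration is everywhere
a scalar multiple of ∇G, i.e. normal to the surface. -/
theorem statement10 (G : EuclideanSpace ℝ (Fin 3) → ℝ) (hG : ContDiff ℝ (⊤ : ℕ∞) G)
    (hsym : ∀ p : EuclideanSpace ℝ (Fin 3), G (mk3 (p 0) (p 1) (-(p 2))) = G p)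
    (I : Set ℝ) (hI : IsOpen I)
    (c : ℝ → EuclideanSpace ℝ (Fin 3)) (hc : ContDiffOn ℝ 2 c I)
    (hunit : ∀ s ∈ I, ‖deriv c s‖ = 1)
    (hplane : ∀ s ∈ I, c s 2 = 0)
    (hsurf : ∀ s ∈ I, G (c s) = 0)
    (hreg : ∀ s ∈ I, gradient G (c s) ≠ 0) :
    ∀ s ∈ I, ∃ k : ℝ, deriv (deriv c) s = k • gradient G (c s) := by
  have hGdiff : ∀ q, DifferentiableAt ℝ G q := fun q => (hG.differentiable (by simp)) q
  -- curve derivatives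
  have hcd : ∀ t ∈ I, HasDerivAt c (deriv c t) t := fun t ht =>
    ((hc.contDiffAt (hI.mem_nhds ht)).differentiableAt (by norm_num)).hasDerivAt
  have hd1 : ContDiffOn ℝ 1 (deriv c) I := hc.deriv_of_isOpen hI (by norm_num)
  have hvd : ∀ t ∈ I, HasDerivAt (deriv c) (deriv (deriv c) t) t := fun t ht =>
    ((hd1.contDiffAt (hI.mem_nhds ht)).differentiableAt (by norm_num)).hasDerivAt
  -- third component of velocity vanishes on I
  have hv2 : ∀ t ∈ I, deriv c t 2 = 0 := by
    intro t ht
    have h := (EuclideanSpace.proj (2 : Fin 3)).hasFDerivAt.comp_hasDerivAt t (hcd t ht)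
    exact st10_deriv_zero_of_const_on hI ht (C := (0 : ℝ)) hplane h
  intro s hs
  set v := deriv c s with hv
  set a := deriv (deriv c) s with ha
  set g := gradient G (c s) with hg
  -- third component of acceleration vanishes
  have ha2 : a 2 = 0 := by
    have h := (EuclideanSpace.proj (2 : Fin 3)).hasFDerivAt.comp_hasDerivAt s (hvd s hs)
    exact st10_deriv_zero_of_const_on hI hs (C := (0 : ℝ)) hv2 h
  -- velocity ⟂ acceleration
  have hva : ⟪v, a⟫ = 0 := by
    have hIn : HasDerivAt (fun t => ⟪deriv c t, deriv c t⟫) (⟪v, a⟫ + ⟪a, v⟫) s :=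
      (hvd s hs).inner ℝ (hvd s hs)
    have hconst : ∀ t ∈ I, ⟪deriv c t, deriv c t⟫ = (1 : ℝ) := by
      intro t ht
      rw [real_inner_self_eq_norm_sq, hunit t ht]; norm_num
    have h0 : ⟪v, a⟫ + ⟪a, v⟫ = 0 :=
      st10_deriv_zero_of_const_on hI hs hconst hIn
    have hcomm : ⟪a, v⟫ = ⟪v, a⟫ := real_inner_comm v a
    linarith
  -- gradient ⟂ velocity
  have hgv : ⟪g, v⟫ = 0 := by
    have h := (hGdiff (c s)).hasFDerivAt.comp_hasDerivAt s (hcd s hs)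
    have h0 : fderiv ℝ G (c s) v = 0 :=
      st10_deriv_zero_of_const_on hI hs (C := (0 : ℝ)) hsurf h
    rw [st10_fderiv_eq_inner] at h0
    exact h0
  have hg2 : g 2 = 0 := st10_grad_comp2 G hG hsym (hplane s hs)
  have hv2s : v 2 = 0 := hv2 s hs
  -- expand inner products
  have e1 : v 0 * a 0 + v 1 * a 1 = 0 := by
    have := hva
    simp [PiLp.inner_apply, Fin.sum_univ_three, hv2s] at this
    linarith
  have e2 : g 0 * v 0 + g 1 * v 1 = 0 := by
    have := hgv
    simp [PiLp.inner_apply, Fin.sum_univ_three, hg2] at this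
    linarith
  -- v ≠ 0 componentwise
  have hvne : v 0 ≠ 0 ∨ v 1 ≠ 0 := by
    by_contra h
    push_neg at h
    have hz : v = 0 := by
      ext i; fin_cases i
      exacts [h.1, h.2, hv2s]
    have hn : ‖v‖ = 1 := hunit s hs
    rw [hz] at hn
    simp at hn
  have hgne : g 0 ≠ 0 ∨ g 1 ≠ 0 := by
    by_contra h
    push_neg at h
    exact hreg s hs (by ext i; fin_cases i; exacts [h.1, h.2, hg2])
  -- cross product vanishes
  have hcross : a 0 * g 1 = a 1 * g 0 := by
    rcases hvne with h0 | h1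
    · have : v 0 * (a 0 * g 1 - a 1 * g 0) = 0 := by linear_combination g 1 * e1 - a 1 * e2
      have := (mul_eq_zero.1 this).resolve_left h0
      linarith
    · have : v 1 * (a 0 * g 1 - a 1 * g 0) = 0 := by linear_combination a 0 * e2 - g 0 * e1
      have := (mul_eq_zero.1 this).resolve_left h1
      linarith
  rcases hgne with h0 | h1
  · refine ⟨a 0 / g 0, ?_⟩
    ext i
    fin_cases i <;> simp only [PiLp.smul_apply, smul_eq_mul, Fin.zero_eta, Fin.mk_one]
    · field_simp
    · field_simp; linear_combination -hcross
    · show a 2 = a 0 / g 0 * g 2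
      rw [ha2, hg2]; ring
  · refine ⟨a 1 / g 1, ?_⟩
    ext i
    fin_cases i <;> simp only [PiLp.smul_apply, smul_eq_mul, Fin.zero_eta, Fin.mk_one]
    · field_simp; linear_combination hcross
    · field_simp
    · show a 2 = a 1 / g 1 * g 2
      rw [ha2, hg2]; ring
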